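/- arXiv:math/0702409 — 3 statements merged into one kernel-verified Lean document; each statement's English description precedes it below -/
import Mathlib

section
/- Every uniformly integrable subset A of L^1(P) over a probability space is contained in the unit ball B^F(P) of some Orlicz space: there exists a Young function F such that ‖f‖_F ≤ 1 for all f ∈ A. -/
open MeasureTheory Filter Set Topology

structure IsYoung (F Fp : ℝ → ℝ) : Prop where
  deriv : ∀ x ∈ Set.Ici (0:ℝ), HasDerivWithinAt F (Fp x) (Set.Ici 0) x
  cont : ContinuousOn Fp (Set.Ici 0)
  nonneg : ∀ x ∈ Set.Ici (0:ℝ), 0 ≤ F x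
  map_zero : F 0 = 0
  deriv_zero : Fp 0 = 0
  strictMono : StrictMonoOn Fp (Set.Ici 0)
  tendsto_atTop : Filter.Tendsto Fp Filter.atTop Filter.atTop

/-!
Pick thresholds `κ n ≥ n` with `∫_{κ n ≤ |f|} |f| ≤ 2⁻ⁿ/4` for every `f ∈ A`, and let
`F' = δ arctan + ∑ₙ ramp (κ n)`, where `ramp c` rises linearly from `0` at `c` to `1` at `c + 1`.
Since `κ n ≥ n` the sum is locally finite, so `F'` is continuous, strictly increasing and
unbounded, and `F x = ∫₀ˣ F' ≤ δ (π / 2) x + ∑ₙ (x - κ n)⁺`. As `E (|f| - κ n)⁺` is at most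
`∫_{κ n ≤ |f|} |f|`, this gives `E F(|f|) ≤ δ (π / 2) E|f| + 1 / 2 ≤ 1` once `δ π (κ 0 + 1) ≤ 1`.
-/

open Real intervalIntegral

lemma isYoung_primitive {g : ℝ → ℝ} (hg : Continuous g) (hg0 : g 0 = 0)
    (hmono : StrictMonoOn g (Ici 0)) (htop : Tendsto g atTop atTop) :
    IsYoung (fun x ↦ ∫ t in (0 : ℝ)..x, g t) g where
  deriv x _ := (hg.integral_hasStrictDerivAt 0 x).hasDerivAt.hasDerivWithinAt
  cont := hg.continuousOn
  nonneg _ hx := intervalIntegral.integral_nonneg hx fun _ ht ↦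
    hg0 ▸ hmono.monotoneOn self_mem_Ici ht.1 ht.1
  map_zero := integral_same
  deriv_zero := hg0
  strictMono := hmono
  tendsto_atTop := htop

lemma integral_arctan_le {x : ℝ} (hx : 0 ≤ x) :
    ∫ t in (0 : ℝ)..x, arctan t ≤ π / 2 * x := by
  calc ∫ t in (0 : ℝ)..x, arctan t ≤ ∫ _ in (0 : ℝ)..x, π / 2 :=
        integral_mono_on hx (continuous_arctan.intervalIntegrable _ _) intervalIntegrable_const
          fun t _ ↦ (arctan_lt_pi_div_two t).le
    _ = π / 2 * x := by simp; ring

noncomputable def ramp (c t : ℝ) : ℝ := min 1 (max 0 (t - c))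

section Ramp

variable {c t : ℝ}

lemma continuous_ramp (c : ℝ) : Continuous (ramp c) := by unfold ramp; fun_prop

lemma monotone_ramp (c : ℝ) : Monotone (ramp c) := fun _ _ h ↦ by unfold ramp; gcongr

lemma ramp_nonneg (c t : ℝ) : 0 ≤ ramp c t := le_min zero_le_one (le_max_left _ _)

lemma ramp_le_one (c t : ℝ) : ramp c t ≤ 1 := min_le_left _ _

lemma ramp_eq_zero (h : t ≤ c) : ramp c t = 0 := by
  simp [ramp, sub_nonpos.2 h]

lemma ramp_eq_one (h : c + 1 ≤ t) : ramp c t = 1 := by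
  simp [ramp, le_sub_iff_add_le'.2 h]

lemma integral_ramp_le {x : ℝ} (hc : 0 ≤ c) (hx : 0 ≤ x) :
    ∫ t in (0 : ℝ)..x, ramp c t ≤ max 0 (x - c) := by
  have hint : ∀ a b, IntervalIntegrable (ramp c) volume a b :=
    fun _ _ ↦ (continuous_ramp c).intervalIntegrable _ _
  have hzero : ∀ y, 0 ≤ y → y ≤ c → ∫ t in (0 : ℝ)..y, ramp c t = 0 := fun y hy hyc ↦ by
    rw [integral_congr (g := fun _ ↦ (0 : ℝ)) fun t ht ↦ ramp_eq_zero ?_,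
      intervalIntegral.integral_zero]
    exact ((uIcc_of_le hy ▸ ht).2).trans hyc
  rcases le_total x c with hxc | hcx
  · simp [hzero x hx hxc]
  · rw [← integral_add_adjacent_intervals (hint 0 c) (hint c x), hzero c hc le_rfl, zero_add]
    calc ∫ t in c..x, ramp c t ≤ ∫ _ in c..x, (1 : ℝ) :=
          integral_mono_on hcx (hint c x) intervalIntegrable_const fun t _ ↦ ramp_le_one c t
      _ = x - c := by simp
      _ ≤ max 0 (x - c) := le_max_right _ _

end Ramp

noncomputable def rampSum (κ : ℕ → ℝ) (t : ℝ) : ℝ := ∑' n, ramp (κ n) t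

section RampSum

variable {κ : ℕ → ℝ} (hκ : ∀ n : ℕ, (n : ℝ) ≤ κ n)
include hκ

lemma rampSum_eq_sum {t : ℝ} {N : ℕ} (ht : t ≤ N) :
    rampSum κ t = ∑ n ∈ Finset.range N, ramp (κ n) t :=
  tsum_eq_sum fun n hn ↦ ramp_eq_zero <|
    ht.trans <| (Nat.cast_le.2 (not_lt.1 (Finset.mem_range.not.1 hn))).trans (hκ n)

lemma rampSum_zero : rampSum κ 0 = 0 := by
  simpa using rampSum_eq_sum hκ (N := 0) le_rfl

lemma continuous_rampSum : Continuous (rampSum κ) := by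
  refine continuous_iff_continuousAt.2 fun t ↦ ?_
  have hN : t < (⌈t⌉₊ + 1 : ℕ) := by push_cast; linarith [Nat.le_ceil t]
  refine ContinuousAt.congr ?_ <| (eventually_lt_nhds hN).mono fun s hs ↦
    (rampSum_eq_sum hκ hs.le).symm
  exact (continuous_finsetSum _ fun n _ ↦ continuous_ramp (κ n)).continuousAt

lemma monotone_rampSum : Monotone (rampSum κ) := fun s t hst ↦ by
  rw [rampSum_eq_sum hκ (hst.trans (Nat.le_ceil t)), rampSum_eq_sum hκ (Nat.le_ceil t)]
  exact Finset.sum_le_sum fun n _ ↦ monotone_ramp (κ n) hst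

lemma tendsto_rampSum_atTop : Tendsto (rampSum κ) atTop atTop := by
  refine tendsto_atTop.2 fun b ↦ ?_
  set N := ⌈b⌉₊
  have hones : ∀ᶠ t in atTop, ∀ n ∈ Finset.range N, ramp (κ n) t = 1 :=
    (Finset.eventually_all _).2 fun n _ ↦ eventually_ge_atTop _ |>.mono fun t ↦ ramp_eq_one
  filter_upwards [hones, eventually_ge_atTop (N : ℝ)] with t hones htN
  calc b ≤ N := Nat.le_ceil b
    _ = ∑ n ∈ Finset.range N, ramp (κ n) t := by simp [Finset.sum_congr rfl hones]
    _ ≤ ∑ n ∈ Finset.range ⌈t⌉₊, ramp (κ n) t :=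
        Finset.sum_le_sum_of_subset_of_nonneg
          (Finset.range_subset_range.2 (Nat.cast_le.1 (htN.trans (Nat.le_ceil t))))
          fun n _ _ ↦ ramp_nonneg _ _
    _ = rampSum κ t := (rampSum_eq_sum hκ (Nat.le_ceil t)).symm

lemma ofReal_integral_rampSum_le {x : ℝ} (hx : 0 ≤ x) :
    ENNReal.ofReal (∫ t in (0 : ℝ)..x, rampSum κ t) ≤ ∑' n, ENNReal.ofReal (x - κ n) := by
  set N := ⌈x⌉₊
  have hκ0 : ∀ n, 0 ≤ κ n := fun n ↦ (Nat.cast_nonneg n).trans (hκ n)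
  have hsum : ∫ t in (0 : ℝ)..x, rampSum κ t =
      ∑ n ∈ Finset.range N, ∫ t in (0 : ℝ)..x, ramp (κ n) t := by
    rw [← integral_finsetSum fun n _ ↦ (continuous_ramp (κ n)).intervalIntegrable _ _]
    refine integral_congr fun t ht ↦ rampSum_eq_sum hκ ?_
    exact ((uIcc_of_le hx ▸ ht).2).trans (Nat.le_ceil x)
  calc ENNReal.ofReal (∫ t in (0 : ℝ)..x, rampSum κ t)
      ≤ ENNReal.ofReal (∑ n ∈ Finset.range N, max 0 (x - κ n)) := by
        rw [hsum]
        exact ENNReal.ofReal_le_ofReal (Finset.sum_le_sum fun n _ ↦ integral_ramp_le (hκ0 n) hx)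
    _ = ∑ n ∈ Finset.range N, ENNReal.ofReal (x - κ n) := by
        rw [ENNReal.ofReal_sum_of_nonneg fun n _ ↦ le_max_left _ _]
        simp [ENNReal.ofReal_max]
    _ ≤ ∑' n, ENNReal.ofReal (x - κ n) := ENNReal.sum_le_tsum _

end RampSum

noncomputable def youngDeriv (δ : ℝ) (κ : ℕ → ℝ) (t : ℝ) : ℝ := δ * arctan t + rampSum κ t

noncomputable def youngFun (δ : ℝ) (κ : ℕ → ℝ) (x : ℝ) : ℝ :=
  ∫ t in (0 : ℝ)..x, youngDeriv δ κ t

section Young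

variable {δ : ℝ} {κ : ℕ → ℝ} (hκ : ∀ n : ℕ, (n : ℝ) ≤ κ n)
include hκ

lemma continuous_youngDeriv : Continuous (youngDeriv δ κ) :=
  (continuous_const.mul continuous_arctan).add (continuous_rampSum hκ)

lemma continuous_youngFun : Continuous (youngFun δ κ) :=
  continuous_primitive (fun _ _ ↦ (continuous_youngDeriv hκ).intervalIntegrable _ _) 0

lemma isYoung_youngFun (hδ : 0 < δ) : IsYoung (youngFun δ κ) (youngDeriv δ κ) :=
  isYoung_primitive (continuous_youngDeriv hκ) (by simp [youngDeriv, rampSum_zero hκ])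
    (((arctan_strictMono.const_mul hδ).strictMonoOn _).add_monotone
      ((monotone_rampSum hκ).monotoneOn _))
    (tendsto_atTop_add_left_of_le _ (δ * -(π / 2))
      (fun t ↦ mul_le_mul_of_nonneg_left (neg_pi_div_two_lt_arctan t).le hδ.le)
      (tendsto_rampSum_atTop hκ))

lemma ofReal_youngFun_le (hδ : 0 ≤ δ) {x : ℝ} (hx : 0 ≤ x) :
    ENNReal.ofReal (youngFun δ κ x) ≤
      ENNReal.ofReal (δ * (π / 2) * x) + ∑' n, ENNReal.ofReal (x - κ n) := by
  have hsplit : youngFun δ κ x =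
      (δ * ∫ t in (0 : ℝ)..x, arctan t) + ∫ t in (0 : ℝ)..x, rampSum κ t := by
    rw [youngFun, ← intervalIntegral.integral_const_mul]
    exact integral_add ((continuous_const.mul continuous_arctan).intervalIntegrable _ _)
      ((continuous_rampSum hκ).intervalIntegrable _ _)
  rw [hsplit, mul_assoc]
  exact ENNReal.ofReal_add_le.trans <| add_le_add
    (ENNReal.ofReal_le_ofReal (mul_le_mul_of_nonneg_left (integral_arctan_le hx) hδ))
    (ofReal_integral_rampSum_le hκ hx)

end Young

section Integrals

variable {Ω : Type*} [MeasurableSpace Ω] {μ : Measure Ω} {f : Ω → ℝ}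

lemma nullMeasurableSet_le_abs (hf : AEMeasurable f μ) (c : ℝ) :
    NullMeasurableSet {ω | c ≤ |f ω|} μ :=
  hf.abs.nullMeasurable measurableSet_Ici

lemma lintegral_ofReal_abs_le [IsProbabilityMeasure μ] (hf : AEMeasurable f μ) (c : ℝ) :
    ∫⁻ ω, ENNReal.ofReal |f ω| ∂μ ≤
      ENNReal.ofReal c + ∫⁻ ω in {ω | c ≤ |f ω|}, ENNReal.ofReal |f ω| ∂μ := by
  rw [← lintegral_indicator₀ (nullMeasurableSet_le_abs hf c)]
  calc ∫⁻ ω, ENNReal.ofReal |f ω| ∂μ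
      ≤ ∫⁻ ω, ENNReal.ofReal c +
          {ω | c ≤ |f ω|}.indicator (fun ω ↦ ENNReal.ofReal |f ω|) ω ∂μ := by
        refine lintegral_mono fun ω ↦ ?_
        by_cases h : c ≤ |f ω|
        · simp [h]
        · simp [h, ENNReal.ofReal_le_ofReal (not_le.1 h).le]
    _ = _ := by rw [lintegral_add_left measurable_const, lintegral_const, measure_univ, mul_one]

lemma lintegral_ofReal_abs_sub_le (hf : AEMeasurable f μ) {c : ℝ} (hc : 0 ≤ c) :
    ∫⁻ ω, ENNReal.ofReal (|f ω| - c) ∂μ ≤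
      ∫⁻ ω in {ω | c ≤ |f ω|}, ENNReal.ofReal |f ω| ∂μ := by
  rw [← lintegral_indicator₀ (nullMeasurableSet_le_abs hf c)]
  refine lintegral_mono fun ω ↦ ?_
  by_cases h : c ≤ |f ω|
  · simpa [h] using hc
  · simp [h, (not_le.1 h).le]

lemma lintegral_ofReal_comp_abs_le {F : ℝ → ℝ} {a : ℝ} {κ : ℕ → ℝ}
    (hF : ∀ x, 0 ≤ x →
      ENNReal.ofReal (F x) ≤ ENNReal.ofReal (a * x) + ∑' n, ENNReal.ofReal (x - κ n))
    (ha : 0 ≤ a) (hf : AEMeasurable f μ) :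
    ∫⁻ ω, ENNReal.ofReal (F |f ω|) ∂μ ≤ ENNReal.ofReal a * ∫⁻ ω, ENNReal.ofReal |f ω| ∂μ +
      ∑' n, ∫⁻ ω, ENNReal.ofReal (|f ω| - κ n) ∂μ := by
  calc ∫⁻ ω, ENNReal.ofReal (F |f ω|) ∂μ
      ≤ ∫⁻ ω, ENNReal.ofReal a * ENNReal.ofReal |f ω| +
          ∑' n, ENNReal.ofReal (|f ω| - κ n) ∂μ :=
        lintegral_mono fun ω ↦ ENNReal.ofReal_mul ha ▸ hF _ (abs_nonneg _)
    _ = _ := by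
      rw [lintegral_add_left' (hf.abs.ennreal_ofReal.const_mul _),
        lintegral_const_mul' _ _ ENNReal.ofReal_ne_top,
        lintegral_tsum fun n ↦ (hf.abs.sub_const _).ennreal_ofReal]

variable {δ : ℝ} {κ : ℕ → ℝ}

lemma lintegral_youngFun_abs_le_one [IsProbabilityMeasure μ] (hf : Integrable f μ)
    (hκ : ∀ n : ℕ, (n : ℝ) ≤ κ n)
    (htail : ∀ n, ∫ ω in {ω | κ n ≤ |f ω|}, |f ω| ∂μ ≤ 1 / 2 / 2 / 2 ^ n)
    (hδ : 0 ≤ δ) (hδκ : δ * π * (κ 0 + 1) ≤ 1) :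
    ∫⁻ ω, ENNReal.ofReal (youngFun δ κ |f ω|) ∂μ ≤ 1 := by
  have hκ0 (n : ℕ) : 0 ≤ κ n := (Nat.cast_nonneg n).trans (hκ n)
  have htail' (n : ℕ) : ∫⁻ ω in {ω | κ n ≤ |f ω|}, ENNReal.ofReal |f ω| ∂μ ≤
      ENNReal.ofReal (1 / 2 / 2 / 2 ^ n) := by
    rw [← ofReal_integral_eq_lintegral_ofReal hf.abs.integrableOn
      (Eventually.of_forall fun _ ↦ abs_nonneg _)]
    exact ENNReal.ofReal_le_ofReal (htail n)
  have hmean : ENNReal.ofReal (δ * (π / 2)) * ∫⁻ ω, ENNReal.ofReal |f ω| ∂μ ≤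
      ENNReal.ofReal (1 / 2) :=
    calc _ ≤ ENNReal.ofReal (δ * (π / 2)) * ENNReal.ofReal (κ 0 + 1) := by
          gcongr
          calc _ ≤ ENNReal.ofReal (κ 0) + ENNReal.ofReal (1 / 2 / 2 / 2 ^ 0) :=
                (lintegral_ofReal_abs_le hf.aemeasurable _).trans (add_le_add le_rfl (htail' 0))
            _ ≤ ENNReal.ofReal (κ 0 + 1) := by
                rw [← ENNReal.ofReal_add (hκ0 0) (by positivity)]
                exact ENNReal.ofReal_le_ofReal (by norm_num)
      _ ≤ ENNReal.ofReal (1 / 2) := by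
          rw [← ENNReal.ofReal_mul (by positivity)]
          exact ENNReal.ofReal_le_ofReal (by linarith)
  have htails : ∑' n, ∫⁻ ω, ENNReal.ofReal (|f ω| - κ n) ∂μ ≤ ENNReal.ofReal (1 / 2) :=
    calc _ ≤ ∑' n : ℕ, ENNReal.ofReal (1 / 2 / 2 / 2 ^ n) := ENNReal.tsum_le_tsum fun n ↦
          (lintegral_ofReal_abs_sub_le hf.aemeasurable (hκ0 n)).trans (htail' n)
      _ = ENNReal.ofReal (1 / 2) := by
          rw [← ENNReal.ofReal_tsum_of_nonneg (fun n ↦ by positivity) (summable_geometric_two' _),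
            tsum_geometric_two']
  calc _ ≤ _ := lintegral_ofReal_comp_abs_le (fun _ ↦ ofReal_youngFun_le hκ hδ)
        (by positivity) hf.aemeasurable
    _ ≤ ENNReal.ofReal (1 / 2) + ENNReal.ofReal (1 / 2) := add_le_add hmean htails
    _ = 1 := by rw [← ENNReal.ofReal_add] <;> norm_num

lemma integral_youngFun_abs_le_one [IsProbabilityMeasure μ] (hf : Integrable f μ)
    (hκ : ∀ n : ℕ, (n : ℝ) ≤ κ n)
    (htail : ∀ n, ∫ ω in {ω | κ n ≤ |f ω|}, |f ω| ∂μ ≤ 1 / 2 / 2 / 2 ^ n)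
    (hδ : 0 < δ) (hδκ : δ * π * (κ 0 + 1) ≤ 1) :
    ∫ ω, youngFun δ κ |f ω| ∂μ ≤ 1 := by
  rw [integral_eq_lintegral_of_nonneg_ae
    (Eventually.of_forall fun ω ↦ (isYoung_youngFun hκ hδ).nonneg _ (abs_nonneg (f ω)))
    ((continuous_youngFun hκ).comp_aestronglyMeasurable hf.1.norm)]
  exact ENNReal.toReal_le_of_le_ofReal zero_le_one
    (ENNReal.ofReal_one ▸ lintegral_youngFun_abs_le_one hf hκ htail hδ.le hδκ)

end Integrals

theorem de_la_vallee_poussin_orlicz {Ω : Type*} [MeasurableSpace Ω] (P : Measure Ω)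
    [IsProbabilityMeasure P] (A : Set (Ω → ℝ))
    (hA : ∀ f ∈ A, Integrable f P)
    (hUI : ∀ ε : ℝ, 0 < ε → ∃ κ : ℝ, ∀ f ∈ A, ∫ ω in {ω | κ ≤ |f ω|}, |f ω| ∂P ≤ ε) :
    ∃ F Fp : ℝ → ℝ, IsYoung F Fp ∧
      ∀ f ∈ A, sInf {a : ℝ | 0 < a ∧ ∫ ω, F (|f ω| / a) ∂P ≤ 1} ≤ 1 := by
  choose c hc using fun n : ℕ ↦ hUI (1 / 2 / 2 / 2 ^ n) (by positivity)
  set κ : ℕ → ℝ := fun n ↦ max (c n) n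
  have hκ : ∀ n : ℕ, (n : ℝ) ≤ κ n := fun n ↦ le_max_right _ _
  have hκ0 : 0 < κ 0 + 1 := by linarith [hκ 0]
  set δ := 1 / (π * (κ 0 + 1))
  have hδ : 0 < δ := one_div_pos.2 (mul_pos pi_pos hκ0)
  have hδκ : δ * π * (κ 0 + 1) ≤ 1 :=
    (mul_assoc δ _ _ ▸ one_div_mul_cancel (mul_pos pi_pos hκ0).ne').le
  have htail (f) (hf : f ∈ A) (n : ℕ) :
      ∫ ω in {ω | κ n ≤ |f ω|}, |f ω| ∂P ≤ 1 / 2 / 2 / 2 ^ n :=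
    (setIntegral_mono_set (hA f hf).abs.integrableOn (Eventually.of_forall fun _ ↦ abs_nonneg _)
      (Eventually.of_forall fun ω h ↦ (le_max_left _ _).trans h)).trans (hc n f hf)
  refine ⟨youngFun δ κ, youngDeriv δ κ, isYoung_youngFun hκ hδ, fun f hf ↦
    csInf_le ⟨0, fun a ha ↦ ha.1.le⟩ ⟨one_pos, ?_⟩⟩
  simpa only [div_one] using integral_youngFun_abs_le_one (hA f hf) hκ (htail f hf) hδ hδκ
end

section
/- Let Q^n ≪ P^n be probability measures for each n. Then (Q^n) is contiguous with respect to (P^n) if and only if the sequence of densities (dQ^n/dP^n) is uniformly integrable with respect to (P^n), i.e., lim_{κ→∞} sup_n E_{P^n}[ (dQ^n/dP^n) 1_{{dQ^n/dP^n > κ}} ] = 0. -/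
/-!
Splitting `∫_A dQ/dP dP` over `{dQ/dP ≤ κ}` and its complement gives
`Q(A) ≤ κ P(A) + ∫_{dQ/dP > κ} dQ/dP dP`, so uniformly small tails force contiguity.
Conversely, if for every level `m` some tail `∫_{dQⁿ/dPⁿ > m} dQⁿ/dPⁿ dPⁿ` exceeds `ε`, then the
indices `n` doing so escape to infinity, since each single tail vanishes as `m → ∞`. Along a
subsequence `n_m` the sets `{dQ^{n_m}/dP^{n_m} > m}` then have `P`-mass at most `1/m` by Markov's
inequality but `Q`-mass above `ε`, which contradicts contiguity.
-/

open MeasureTheory Filter Set Topology Function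
open scoped ENNReal

namespace MeasureTheory

section SingleMeasure

variable {α : Type*} [MeasurableSpace α]

lemma antitone_setLIntegral_lt (μ : Measure α) (f : α → ℝ≥0∞) :
    Antitone fun κ : ℝ≥0∞ => ∫⁻ x in {x | κ < f x}, f x ∂μ :=
  fun _ _ hκ => lintegral_mono_set fun _ hx => lt_of_le_of_lt hκ hx

lemma setLIntegral_le_mul_measure_add_setLIntegral_lt (μ : Measure α) (f : α → ℝ≥0∞)
    (s : Set α) (κ : ℝ≥0∞) :
    ∫⁻ x in s, f x ∂μ ≤ κ * μ s + ∫⁻ x in {x | κ < f x}, f x ∂μ :=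
  calc ∫⁻ x in s, f x ∂μ
      ≤ ∫⁻ x in (s ∩ {x | f x ≤ κ}) ∪ {x | κ < f x}, f x ∂μ :=
        lintegral_mono_set fun x hx => (le_or_gt (f x) κ).imp (⟨hx, ·⟩) id
    _ ≤ ∫⁻ x in s ∩ {x | f x ≤ κ}, f x ∂μ + ∫⁻ x in {x | κ < f x}, f x ∂μ :=
        lintegral_union_le _ _ _
    _ ≤ ∫⁻ _ in s ∩ {x | f x ≤ κ}, κ ∂μ + ∫⁻ x in {x | κ < f x}, f x ∂μ := by
        gcongr ?_ + _
        exact setLIntegral_mono measurable_const fun _ hx => hx.2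
    _ ≤ κ * μ s + ∫⁻ x in {x | κ < f x}, f x ∂μ := by
        rw [setLIntegral_const]
        gcongr
        exact inter_subset_left

namespace Measure

variable (μ ν : Measure α) [IsProbabilityMeasure μ]

lemma measure_lt_rnDeriv_le_inv (κ : ℝ≥0∞) : ν {x | κ < μ.rnDeriv ν x} ≤ κ⁻¹ := by
  have markov : κ * ν {x | κ ≤ μ.rnDeriv ν x} ≤ 1 :=
    calc κ * ν {x | κ ≤ μ.rnDeriv ν x} ≤ ∫⁻ x, μ.rnDeriv ν x ∂ν :=
          mul_meas_ge_le_lintegral₀ (measurable_rnDeriv μ ν).aemeasurable κ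
      _ ≤ μ univ := lintegral_rnDeriv_le
      _ = 1 := measure_univ
  calc ν {x | κ < μ.rnDeriv ν x} ≤ ν {x | κ ≤ μ.rnDeriv ν x} :=
        measure_mono <| ofPred_subset_ofPred.2 fun _ => le_of_lt
    _ ≤ κ⁻¹ := ENNReal.le_inv_iff_mul_le.2 (by rwa [mul_comm])

lemma tendsto_setLIntegral_natCast_lt_rnDeriv :
    Tendsto (fun k : ℕ => ∫⁻ x in {x | (k : ℝ≥0∞) < μ.rnDeriv ν x}, μ.rnDeriv ν x ∂ν)
      atTop (𝓝 0) := by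
  have hfin : ∫⁻ x, μ.rnDeriv ν x ∂ν ≠ ∞ :=
    (lintegral_rnDeriv_le.trans_lt (measure_lt_top μ univ)).ne
  refine tendsto_setLIntegral_zero hfin ?_
  exact tendsto_of_tendsto_of_tendsto_of_le_of_le tendsto_const_nhds
    ENNReal.tendsto_inv_nat_nhds_zero (fun _ => zero_le)
    fun k => measure_lt_rnDeriv_le_inv μ ν k

end Measure

end SingleMeasure

lemma frequently_lt_of_forall_exists_lt {β : Type*} [LinearOrder β] [TopologicalSpace β]
    [OrderTopology β] {g : ℕ → ℕ → β} {a ε : β} (hanti : ∀ n, Antitone (g n))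
    (hlim : ∀ n, Tendsto (g n) atTop (𝓝 a)) (ha : a < ε) (hex : ∀ m, ∃ n, ε < g n m)
    (m : ℕ) : ∃ᶠ n in atTop, ε < g n m := by
  refine frequently_atTop.2 fun N => ?_
  have hsmall : ∀ᶠ m' in atTop, ∀ n ∈ Iio N, g n m' < ε :=
    (finite_Iio N).eventually_all.2 fun n _ => (hlim n).eventually_lt_const ha
  obtain ⟨m', hm', hmm'⟩ := (hsmall.and (eventually_ge_atTop m)).exists
  obtain ⟨n, hn⟩ := hex m'
  exact ⟨n, not_lt.1 fun hnN => (hm' n hnN).not_gt hn, hn.trans_le (hanti n hmm')⟩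

section Sequences

variable {Ω : ℕ → Type*} [∀ n, MeasurableSpace (Ω n)]

def Contiguous (Q P : ∀ n, Measure (Ω n)) : Prop :=
  ∀ A : ∀ n, Set (Ω n), (∀ n, MeasurableSet (A n)) →
    Tendsto (fun n => P n (A n)) atTop (𝓝 0) → Tendsto (fun n => Q n (A n)) atTop (𝓝 0)

def UnifTailIntegrable (f : ∀ n, Ω n → ℝ≥0∞) (P : ∀ n, Measure (Ω n)) : Prop :=
  ∀ ε : ℝ≥0∞, 0 < ε → ∃ κ₀ : ℝ≥0∞, κ₀ < ⊤ ∧ ∀ κ : ℝ≥0∞, κ₀ ≤ κ → ∀ n,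
    ∫⁻ x in {x | κ < f n x}, f n x ∂(P n) ≤ ε

variable {P Q : ∀ n, Measure (Ω n)}

lemma unifTailIntegrable_of_forall_exists_nat {f : ∀ n, Ω n → ℝ≥0∞}
    (h : ∀ ε : ℝ≥0∞, 0 < ε → ∃ m : ℕ, ∀ n, ∫⁻ x in {x | (m : ℝ≥0∞) < f n x}, f n x ∂(P n) ≤ ε) :
    UnifTailIntegrable f P := fun ε hε =>
  let ⟨m, hm⟩ := h ε hε
  ⟨m, ENNReal.natCast_lt_top m, fun _ hκ n => (antitone_setLIntegral_lt _ _ hκ).trans (hm n)⟩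

open Classical in
lemma Contiguous.tendsto_comp_strictMono (h : Contiguous Q P) {φ : ℕ → ℕ} (hφ : StrictMono φ)
    {A : ∀ n, Set (Ω n)} (hA : ∀ n, MeasurableSet (A n))
    (hPA : Tendsto (fun j => P (φ j) (A (φ j))) atTop (𝓝 0)) :
    Tendsto (fun j => Q (φ j) (A (φ j))) atTop (𝓝 0) := by
  set B : ∀ n, Set (Ω n) := fun n => if n ∈ range φ then A n else ∅
  have hBφ : ∀ j, B (φ j) = A (φ j) := fun j => if_pos (mem_range_self j)
  have hB : ∀ n, MeasurableSet (B n) := fun n => by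
    by_cases hn : n ∈ range φ
    · simpa only [B, if_pos hn] using hA n
    · simp only [B, if_neg hn, MeasurableSet.empty]
  have hPB : Tendsto (fun n => P n (B n)) atTop (𝓝 0) := by
    refine ENNReal.tendsto_nhds_zero.2 fun ε hε => ?_
    obtain ⟨J, hJ⟩ := eventually_atTop.1 (ENNReal.tendsto_nhds_zero.1 hPA ε hε)
    refine eventually_atTop.2 ⟨φ J, fun n hn => ?_⟩
    by_cases hnφ : n ∈ range φ
    · obtain ⟨j, rfl⟩ := hnφ
      exact (hBφ j).symm ▸ hJ j (hφ.le_iff_le.1 hn)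
    · simp only [B, if_neg hnφ, measure_empty, zero_le]
  simpa only [comp_def, hBφ] using (h B hB hPB).comp hφ.tendsto_atTop

theorem Contiguous.unifTailIntegrable_rnDeriv [∀ n, IsProbabilityMeasure (Q n)]
    (h : Contiguous Q P) : UnifTailIntegrable (fun n => (Q n).rnDeriv (P n)) P := by
  refine unifTailIntegrable_of_forall_exists_nat fun ε hε => ?_
  by_contra! hbad
  obtain ⟨φ, hφ, hφε⟩ := extraction_forall_of_frequently
    (frequently_lt_of_forall_exists_lt
      (fun n => (antitone_setLIntegral_lt _ _).comp_monotone Nat.mono_cast)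
      (fun n => (Q n).tendsto_setLIntegral_natCast_lt_rnDeriv (P n)) hε hbad)
  set A : ∀ n, Set (Ω n) := fun n => {x | ((invFun φ n : ℕ) : ℝ≥0∞) < (Q n).rnDeriv (P n) x}
  have hAφ : ∀ j, A (φ j) = {x | (j : ℝ≥0∞) < (Q (φ j)).rnDeriv (P (φ j)) x} := fun j => by
    simp only [A, leftInverse_invFun hφ.injective j]
  have hA : ∀ n, MeasurableSet (A n) := fun n =>
    measurableSet_lt measurable_const (Measure.measurable_rnDeriv _ _)
  have hPA : Tendsto (fun j => P (φ j) (A (φ j))) atTop (𝓝 0) :=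
    tendsto_of_tendsto_of_tendsto_of_le_of_le tendsto_const_nhds
      ENNReal.tendsto_inv_nat_nhds_zero (fun _ => zero_le)
      fun j => hAφ j ▸ Measure.measure_lt_rnDeriv_le_inv _ _ _
  have hQA : ∀ j, ε < Q (φ j) (A (φ j)) := fun j =>
    (hφε j).trans_le (hAφ j ▸ Measure.setLIntegral_rnDeriv_le _)
  obtain ⟨j, hj⟩ := ((h.tendsto_comp_strictMono hφ hA hPA).eventually_lt_const hε).exists
  exact (hQA j).not_gt hj

theorem UnifTailIntegrable.contiguous [∀ n, SigmaFinite (P n)] [∀ n, SigmaFinite (Q n)]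
    (hac : ∀ n, Q n ≪ P n) (h : UnifTailIntegrable (fun n => (Q n).rnDeriv (P n)) P) :
    Contiguous Q P := by
  intro A _ hPA
  refine ENNReal.tendsto_nhds_zero.2 fun ε hε => ?_
  obtain ⟨κ, hκ, hκtail⟩ := h (ε / 2) (ENNReal.half_pos hε.ne')
  have hκPA : Tendsto (fun n => κ * P n (A n)) atTop (𝓝 0) := by
    simpa using ENNReal.Tendsto.const_mul hPA (Or.inr hκ.ne)
  filter_upwards [ENNReal.tendsto_nhds_zero.1 hκPA (ε / 2) (ENNReal.half_pos hε.ne')] with n hn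
  calc Q n (A n) = ∫⁻ x in A n, (Q n).rnDeriv (P n) x ∂(P n) :=
        (Measure.setLIntegral_rnDeriv (hac n) _).symm
    _ ≤ κ * P n (A n) + ∫⁻ x in {x | κ < (Q n).rnDeriv (P n) x}, (Q n).rnDeriv (P n) x ∂(P n) :=
        setLIntegral_le_mul_measure_add_setLIntegral_lt _ _ _ _
    _ ≤ ε / 2 + ε / 2 := add_le_add hn (hκtail κ le_rfl n)
    _ = ε := ENNReal.add_halves ε

end Sequences

end MeasureTheory

theorem contiguity_iff_uniformly_integrable_densities
    {Ω : ℕ → Type*} [∀ n, MeasurableSpace (Ω n)]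
    (P Q : ∀ n, Measure (Ω n)) [∀ n, IsProbabilityMeasure (P n)]
    [∀ n, IsProbabilityMeasure (Q n)] (hac : ∀ n, Q n ≪ P n) :
    (∀ A : ∀ n, Set (Ω n), (∀ n, MeasurableSet (A n)) →
        Tendsto (fun n => P n (A n)) atTop (nhds 0) →
        Tendsto (fun n => Q n (A n)) atTop (nhds 0)) ↔
    (∀ ε : ℝ≥0∞, 0 < ε → ∃ κ₀ : ℝ≥0∞, κ₀ < ⊤ ∧ ∀ κ : ℝ≥0∞, κ₀ ≤ κ → ∀ n,
        ∫⁻ x in {x | κ < (Q n).rnDeriv (P n) x}, (Q n).rnDeriv (P n) x ∂(P n) ≤ ε) :=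
  ⟨Contiguous.unifTailIntegrable_rnDeriv, UnifTailIntegrable.contiguous hac⟩
end

section
/- Let u: ℝ → ℝ be nondecreasing and concave with u(0) = 0. Then for every ε > 0 there exists a Young function F such that u_F(x) - ε ≤ u(x) for all x ∈ ℝ, where u_F(x) = -F(-x) for x ≤ 0 and u_F(x) = 0 for x > 0. -/
open MeasureTheory Filter Set Topology

/-!
With `G t = -u (-t)` (continuous, nondecreasing, `G 0 = 0`) the claim is `G t ≤ F t + ε` for
`t ≥ 0`; on `x > 0` it is just `u x ≥ u 0 = 0`. Take `F` with derivative `s + (2 / δ) G (2 s)`,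
where `G < ε` on `[0, δ)`. Since `G (2 s) ≥ G t` for `s ≥ t / 2`, we get `F t ≥ (t / δ) G t ≥ G t`
once `t ≥ δ`; for `t < δ` the bound `G t < ε` suffices. The dilation `2 s` is what lets `F` keep
up with an arbitrarily fast-growing `G`.
-/

theorem isYoung_integral {Fp : ℝ → ℝ} (hcont : Continuous Fp) (hzero : Fp 0 = 0)
    (hmono : StrictMonoOn Fp (Ici 0)) (htendsto : Tendsto Fp atTop atTop) :
    IsYoung (fun t => ∫ s in (0:ℝ)..t, Fp s) Fp where
  deriv x _ := (hcont.integral_hasStrictDerivAt 0 x).hasDerivAt.hasDerivWithinAt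
  cont := hcont.continuousOn
  nonneg _ hx := intervalIntegral.integral_nonneg hx fun _ hs =>
    hzero ▸ hmono.monotoneOn self_mem_Ici hs.1 hs.1
  map_zero := intervalIntegral.integral_same
  deriv_zero := hzero
  strictMono := hmono
  tendsto_atTop := htendsto

theorem Monotone.half_mul_le_integral_comp_two_mul {G : ℝ → ℝ} (hG : Monotone G)
    (hG0 : 0 ≤ G 0) {t : ℝ} (ht : 0 ≤ t) :
    t / 2 * G t ≤ ∫ s in (0:ℝ)..t, G (2 * s) := by
  have hG2 : Monotone fun s => G (2 * s) := hG.comp fun a b h => by linarith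
  rw [← intervalIntegral.integral_add_adjacent_intervals (b := t / 2)
    (hG2.intervalIntegrable) (hG2.intervalIntegrable)]
  have hlow : 0 ≤ ∫ s in (0:ℝ)..t / 2, G (2 * s) :=
    intervalIntegral.integral_nonneg (by linarith) fun s hs =>
      hG0.trans (hG (by linarith [hs.1]))
  have hhigh : ∫ s in t / 2..t, G t ≤ ∫ s in t / 2..t, G (2 * s) :=
    intervalIntegral.integral_mono_on (by linarith) intervalIntegrable_const
      hG2.intervalIntegrable fun s hs => hG (by linarith [hs.1])
  rw [intervalIntegral.integral_const, smul_eq_mul] at hhigh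
  linarith

theorem isYoung_integral_id_add_const_mul_comp_two_mul {G : ℝ → ℝ} (hG : Monotone G)
    (hGc : Continuous G) (hG0 : G 0 = 0) {c : ℝ} (hc : 0 ≤ c) :
    IsYoung (fun t => ∫ s in (0:ℝ)..t, (s + c * G (2 * s))) fun s => s + c * G (2 * s) := by
  have hle : ∀ᶠ s in atTop, s ≤ s + c * G (2 * s) := by
    filter_upwards [eventually_ge_atTop 0] with s hs
    exact le_add_of_nonneg_right (mul_nonneg hc (hG0 ▸ hG (by linarith)))
  exact isYoung_integral (by fun_prop) (by simp [hG0])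
    (fun a _ b _ hab => add_lt_add_of_lt_of_le hab (by gcongr; exact hG (by linarith)))
    (tendsto_atTop_mono' atTop hle tendsto_id)

theorem le_integral_id_add_div_mul_comp_two_mul {G : ℝ → ℝ} (hG : Monotone G) (hG0 : 0 ≤ G 0)
    {δ t : ℝ} (hδ : 0 < δ) (ht : δ ≤ t) :
    G t ≤ ∫ s in (0:ℝ)..t, (s + 2 / δ * G (2 * s)) := by
  have ht0 : 0 ≤ t := hδ.le.trans ht
  have hG2 : Monotone fun s => G (2 * s) := hG.comp fun a b h => by linarith
  rw [intervalIntegral.integral_add intervalIntegral.intervalIntegrable_id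
    (hG2.intervalIntegrable.const_mul _), intervalIntegral.integral_const_mul, integral_id]
  have hdil : G t ≤ 2 / δ * (t / 2 * G t) :=
    calc G t ≤ t / δ * G t :=
          le_mul_of_one_le_left (hG0.trans (hG ht0)) ((one_le_div hδ).mpr ht)
      _ = 2 / δ * (t / 2 * G t) := by ring
  have hint := mul_le_mul_of_nonneg_left (hG.half_mul_le_integral_comp_two_mul hG0 ht0)
    (by positivity : (0:ℝ) ≤ 2 / δ)
  linarith [sq_nonneg t]

theorem concave_utility_minorized_by_young (u : ℝ → ℝ)
    (hmono : Monotone u) (hconc : ConcaveOn ℝ Set.univ u) (hu0 : u 0 = 0) :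
    ∀ ε : ℝ, 0 < ε → ∃ F Fp : ℝ → ℝ, IsYoung F Fp ∧
      ∀ x : ℝ, (if x ≤ 0 then -F (-x) else 0) - ε ≤ u x := by
  intro ε hε
  set G : ℝ → ℝ := fun t => -u (-t) with hG_def
  have hG : Monotone G := fun a b h => neg_le_neg (hmono (neg_le_neg h))
  have hG0 : G 0 = 0 := by simp [hG_def, hu0]
  have hGc : Continuous G :=
    (continuousOn_univ.mp (hconc.continuousOn isOpen_univ)).comp continuous_neg |>.neg
  obtain ⟨δ, hδ, hsmall⟩ : ∃ δ > 0, ∀ t, dist t 0 < δ → G t < ε :=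
    Metric.eventually_nhds_iff.mp (hGc.continuousAt.eventually (gt_mem_nhds (hG0.symm ▸ hε)))
  have young :=
    isYoung_integral_id_add_const_mul_comp_two_mul hG hGc hG0 (by positivity : 0 ≤ 2 / δ)
  refine ⟨_, _, young, fun x => ?_⟩
  split_ifs with hx
  · have hF := young.nonneg (-x) (neg_nonneg.mpr hx)
    have hGx : u x = -G (-x) := by simp [hG_def]
    rcases lt_or_ge (-x) δ with hxδ | hδx
    · have := hsmall (-x) (by simpa [Real.dist_eq, abs_of_nonpos hx] using hxδ)
      linarith
    · have := le_integral_id_add_div_mul_comp_two_mul hG hG0.ge hδ hδx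
      linarith
  · linarith [hmono (le_of_not_ge hx)]
end
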